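/- For all x > 0, a > 0, b > 0 with b ≠ x, the integral over t in (0, ∞) of cos(a t) / ((b² + t²)(x² + t²)) dt equals (π / (2 b x)) · (b·e^{-a x} − x·e^{-a b}) / (b² − x²). -/

import Mathlib

open Real MeasureTheory Set
open scoped FourierTransform

/-!
The Fourier transform of `v ↦ exp (-2πc|v|)` is `w ↦ c / (π (c² + w²))`, computed by
splitting the line at `0` into two exponential integrals. Fourier inversion at `a / (2π)`,
after taking real parts, gives `∫ cos (a t) / (c² + t²) dt = (π / c) exp (-c|a|)` over `ℝ`,
hence half of it over `(0, ∞)` by evenness. The theorem follows from the partial fractions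
`1 / ((b² + t²)(x² + t²)) = (1 / (x² + t²) - 1 / (b² + t²)) / (b² - x²)`.
-/

lemma integrable_inv_sq_add_sq {c : ℝ} (hc : c ≠ 0) :
    Integrable fun t : ℝ => (c ^ 2 + t ^ 2)⁻¹ := by
  refine ((integrable_inv_one_add_sq.comp_mul_left' (inv_ne_zero hc)).const_mul
    (c ^ 2)⁻¹).congr (Filter.Eventually.of_forall fun t => ?_)
  field_simp

lemma integrable_cos_mul_div_sq_add_sq (a : ℝ) {c : ℝ} (hc : c ≠ 0) :
    Integrable fun t : ℝ => cos (a * t) / (c ^ 2 + t ^ 2) := by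
  simp_rw [div_eq_mul_inv]
  refine (integrable_inv_sq_add_sq hc).bdd_mul (c := 1) (by fun_prop)
    (Filter.Eventually.of_forall fun t => ?_)
  simpa using abs_cos_le_one (a * t)

lemma integrable_exp_neg_mul_abs {c : ℝ} (hc : 0 < c) :
    Integrable fun v : ℝ => exp (-c * |v|) := by
  rw [← integrableOn_univ, ← Iic_union_Ioi (a := 0), integrableOn_union]
  constructor
  · refine (integrableOn_exp_mul_Iic hc 0).congr_fun (fun v hv => ?_) measurableSet_Iic
    rw [abs_of_nonpos hv, mul_neg, neg_mul, neg_neg]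
  · refine (integrableOn_exp_mul_Ioi (neg_neg_of_pos hc) 0).congr_fun (fun v hv => ?_)
      measurableSet_Ioi
    rw [abs_of_pos hv]

theorem fourier_exp_neg_two_pi_mul_abs {c : ℝ} (hc : 0 < c) (w : ℝ) :
    𝓕 (fun v : ℝ => (exp (-(2 * π * c) * |v|) : ℂ)) w = (c / (π * (c ^ 2 + w ^ 2)) : ℝ) := by
  set s : ℂ := 2 * π * (c + w * Complex.I)
  set s' : ℂ := 2 * π * (c - w * Complex.I)
  have hs : 0 < s.re := by simp [s]; positivity
  have hs' : 0 < s'.re := by simp [s']; positivity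
  set F : ℝ → ℂ := fun v =>
    Complex.exp (↑(-2 * π * v * w) * Complex.I) • (exp (-(2 * π * c) * |v|) : ℂ)
  have hF_Ioi : EqOn F (fun v => Complex.exp (-s * v)) (Ioi 0) := fun v hv => by
    simp only [F, smul_eq_mul, abs_of_pos (mem_Ioi.mp hv), Complex.ofReal_exp,
      ← Complex.exp_add]
    congr 1; push_cast; ring
  have hF_Iic : EqOn F (fun v => Complex.exp (s' * v)) (Iic 0) := fun v hv => by
    simp only [F, smul_eq_mul, abs_of_nonpos (mem_Iic.mp hv), Complex.ofReal_exp,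
      ← Complex.exp_add]
    congr 1; push_cast; ring
  have hIoi : ∫ v in Ioi 0, F v = s⁻¹ := by
    rw [setIntegral_congr_fun measurableSet_Ioi hF_Ioi,
      integral_exp_mul_complex_Ioi (by simpa using hs)]
    simp
  have hIic : ∫ v in Iic 0, F v = s'⁻¹ := by
    rw [setIntegral_congr_fun measurableSet_Iic hF_Iic, integral_exp_mul_complex_Iic hs']
    simp
  rw [fourier_real_eq_integral_exp_smul, ← intervalIntegral.integral_Iic_add_Ioi
    ((integrableOn_exp_mul_complex_Iic hs' 0).congr_fun hF_Iic.symm measurableSet_Iic)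
    ((integrableOn_exp_mul_complex_Ioi (by simpa using hs) 0).congr_fun hF_Ioi.symm
      measurableSet_Ioi), hIoi, hIic]
  have hsum : s' + s = 4 * π * c := by simp only [s, s']; ring
  have hprod : s' * s = 4 * π ^ 2 * (c ^ 2 + w ^ 2 : ℝ) := by
    simp only [s, s']; push_cast; linear_combination (-4 * π ^ 2 * w ^ 2 : ℂ) * Complex.I_sq
  have : π * (c ^ 2 + w ^ 2) ≠ 0 := by positivity
  rw [inv_add_inv (Complex.ne_zero_of_re_pos hs') (Complex.ne_zero_of_re_pos hs), hsum,
    hprod]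
  push_cast
  field_simp

theorem integral_cos_mul_div_sq_add_sq (a : ℝ) {c : ℝ} (hc : 0 < c) :
    ∫ t, cos (a * t) / (c ^ 2 + t ^ 2) = π / c * exp (-c * |a|) := by
  set f : ℝ → ℂ := fun v => (exp (-(2 * π * c) * |v|) : ℂ)
  set g : ℝ → ℝ := fun w => c / π * (c ^ 2 + w ^ 2)⁻¹
  have hg : Integrable g := (integrable_inv_sq_add_sq hc.ne').const_mul _
  have hfg : 𝓕 f = fun w => (g w : ℂ) := by
    ext w
    rw [fourier_exp_neg_two_pi_mul_abs hc]
    simp only [g]; congr 1; field_simp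
  have hinv : 𝓕⁻ (𝓕 f) (a / (2 * π)) = f (a / (2 * π)) :=
    congr_fun ((by fun_prop : Continuous f).fourierInv_fourier_eq
      (integrable_exp_neg_mul_abs (by positivity)).ofReal (hfg ▸ hg.ofReal)) _
  rw [hfg, fourierInv_eq'] at hinv
  have hint : Integrable fun w : ℝ =>
      Complex.exp (↑(2 * π * inner ℝ w (a / (2 * π))) * Complex.I) • (g w : ℂ) :=
    hg.ofReal.bdd_mul (c := 1) (by fun_prop)
      (Filter.Eventually.of_forall fun w => (Complex.norm_exp_ofReal_mul_I _).le)
  have hre := congr_arg Complex.re hinv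
  rw [← RCLike.re_to_complex, ← integral_re hint] at hre
  simp only [RCLike.re_to_complex, smul_eq_mul, Complex.re_mul_ofReal,
    Complex.exp_ofReal_mul_I_re, f, Complex.ofReal_re, Real.inner_apply] at hre
  have hcos : ∀ w, cos (2 * π * (w * (a / (2 * π)))) * g w
      = c / π * (cos (a * w) / (c ^ 2 + w ^ 2)) := fun w => by
    simp only [g]; field_simp
  have hexp : -(2 * π * c) * |a / (2 * π)| = -c * |a| := by
    rw [abs_div, abs_of_pos (by positivity : 0 < 2 * π)]; field_simp
  simp only [hcos, integral_const_mul, hexp] at hre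
  rw [← hre]
  field_simp

theorem integral_Ioi_cos_mul_div_sq_add_sq (a : ℝ) {c : ℝ} (hc : 0 < c) :
    ∫ t in Ioi 0, cos (a * t) / (c ^ 2 + t ^ 2) = π / (2 * c) * exp (-c * |a|) := by
  have heven : ∀ t : ℝ, cos (a * |t|) / (c ^ 2 + |t| ^ 2) = cos (a * t) / (c ^ 2 + t ^ 2) :=
    fun t => by rcases abs_choice t with h | h <;> simp [h]
  have h := integral_comp_abs (f := fun t => cos (a * t) / (c ^ 2 + t ^ 2))
  simp only [heven, integral_cos_mul_div_sq_add_sq a hc] at h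
  rw [← mul_right_inj' (two_ne_zero' ℝ), ← h]
  ring

theorem cos_two_quadratics (a b x : ℝ) (hx : 0 < x) (ha : 0 < a) (hb : 0 < b) (hbx : b ≠ x) :
    ∫ t in Set.Ioi (0:ℝ), Real.cos (a * t) / ((b ^ 2 + t ^ 2) * (x ^ 2 + t ^ 2))
      = (Real.pi / (2 * b * x)) *
        ((b * Real.exp (-a * x) - x * Real.exp (-a * b)) / (b ^ 2 - x ^ 2)) := by
  have hbx2 : b ^ 2 - x ^ 2 ≠ 0 := by
    rw [sq_sub_sq]; exact mul_ne_zero (by positivity) (sub_ne_zero.mpr hbx)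
  have hpartial : ∀ t, cos (a * t) / ((b ^ 2 + t ^ 2) * (x ^ 2 + t ^ 2))
      = (b ^ 2 - x ^ 2)⁻¹ * (cos (a * t) / (x ^ 2 + t ^ 2) - cos (a * t) / (b ^ 2 + t ^ 2)) :=
    fun t => by field_simp; ring
  simp only [hpartial]
  rw [integral_const_mul, integral_sub (integrable_cos_mul_div_sq_add_sq a hx.ne').integrableOn
    (integrable_cos_mul_div_sq_add_sq a hb.ne').integrableOn,
    integral_Ioi_cos_mul_div_sq_add_sq a hx, integral_Ioi_cos_mul_div_sq_add_sq a hb,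
    abs_of_pos ha]
  field_simp
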